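/- If the 3CM M does not halt, then for every X ∈ {O, SO, R, E} there is no terminating (i.e., fair and finite) X-derivation from the knowledge base ⟨R_M, {End(w)}⟩. -/

import Mathlib

set_option maxHeartbeats 1000000
set_option synthInstance.maxHeartbeats 1000000
set_option synthInstance.maxSize 512

attribute [local instance] Classical.propDecidable

noncomputable section

/-! ### Terms and atoms -/

/-- Variables: ordinary variables `Sum.inl n`, or fresh variables `Sum.inr (c, k)`
introduced by the trigger with code `c` for the head variable with code `k`. -/
abbrev Var : Type := ℕ ⊕ (ℕ × ℕ)

/-- Terms: constants `Sum.inl c` or variables `Sum.inr v`. -/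
abbrev FTerm : Type := ℕ ⊕ Var

def ct (n : ℕ) : FTerm := Sum.inl n
def vt (n : ℕ) : FTerm := Sum.inr (Sum.inl n)

/-- An atom: a predicate name together with its list of arguments. -/
abbrev Atom : Type := ℕ × List FTerm

/-- Active domain: all terms occurring in an atom set. -/
def adom (J : Set Atom) : Set FTerm := {t | ∃ a ∈ J, t ∈ a.2}

def atomVarsF (a : Atom) : Finset Var := (a.2.filterMap Sum.getRight?).toFinset

def varsF (A : Finset Atom) : Finset Var := A.biUnion atomVarsF

def setVars (J : Set Atom) : Set Var := {v | ∃ a ∈ J, Sum.inr v ∈ a.2}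

/-! ### Substitutions and homomorphisms -/

abbrev Subst := Var → FTerm

def applyT (σ : Subst) : FTerm → FTerm
  | Sum.inl c => Sum.inl c
  | Sum.inr v => σ v

def applyA (σ : Subst) (a : Atom) : Atom := (a.1, a.2.map (applyT σ))

def IsHomOn (σ : Subst) (A B : Set Atom) : Prop := ∀ a ∈ A, applyA σ a ∈ B

def HomBetween (A B : Set Atom) : Prop := ∃ σ : Subst, IsHomOn σ A B

def IsRetraction (σ : Subst) (A B : Set Atom) : Prop :=
  IsHomOn σ A B ∧ ∀ v ∈ setVars A ∩ setVars B, σ v = Sum.inr v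

/-- Isomorphism of atom sets: a pair of mutually inverse homomorphisms. -/
def Isomorphic (A B : Set Atom) : Prop :=
  ∃ σ τ : Subst, IsHomOn σ A B ∧ IsHomOn τ B A ∧
    (∀ a ∈ A, applyA τ (applyA σ a) = a) ∧ (∀ b ∈ B, applyA σ (applyA τ b) = b)

/-! ### Rules -/

/-- A rule is a pair (body, head). Its existential variables are the head variables
not occurring in the body; its frontier the variables shared by body and head.
A rule is Datalog when every head variable occurs in the body. -/
abbrev Rule : Type := Finset Atom × Finset Atom

def frontierOf (R : Rule) : Finset Var := varsF R.1 ∩ varsF R.2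

def DatRules (Rset : Finset Rule) : Finset Rule := Rset.filter fun R => varsF R.2 ⊆ varsF R.1
def NDatRules (Rset : Finset Rule) : Finset Rule := Rset.filter fun R => ¬ varsF R.2 ⊆ varsF R.1

/-- Satisfaction of a rule in an atom set. -/
def SatisfiesRule (J : Set Atom) (R : Rule) : Prop :=
  ∀ σ : Subst, IsHomOn σ (R.1 : Set Atom) J →
    ∃ σ' : Subst, (∀ v ∈ varsF R.1, σ' v = σ v) ∧ IsHomOn σ' (R.2 : Set Atom) J

def IsModel (Rset : Finset Rule) (I J : Set Atom) : Prop :=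
  (∀ R ∈ Rset, SatisfiesRule J R) ∧ HomBetween I J

/-- BCQ entailment: every model of the KB satisfies the query. -/
def Entails (Rset : Finset Rule) (I q : Set Atom) : Prop :=
  ∀ J : Set Atom, IsModel Rset I J → HomBetween q J

def IsUniversalModel (Rset : Finset Rule) (I U : Set Atom) : Prop :=
  IsModel Rset I U ∧ ∀ J : Set Atom, IsModel Rset I J → HomBetween U J

/-! ### Triggers -/

structure Trigger where
  rule : Rule
  sub : Subst

/-- Injective code of a trigger (a trigger is determined by its rule and the
restriction of its substitution to the body variables). -/
def Trigger.code (t : Trigger) : ℕ :=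
  Encodable.encode (t.rule, (varsF t.rule.1).image fun v => (v, t.sub v))

/-- The canonical extension of the trigger substitution, mapping each existential
variable `z` to the fresh variable unique for `z` and the trigger. -/
def Trigger.extSub (t : Trigger) : Subst := fun v =>
  if v ∈ varsF t.rule.1 then t.sub v
  else Sum.inr (Sum.inr (t.code, Encodable.encode v))

def Trigger.out (t : Trigger) : Finset Atom := t.rule.2.image (applyA t.extSub)

def Trigger.isOn (t : Trigger) (J : Set Atom) : Prop := IsHomOn t.sub (t.rule.1 : Set Atom) J

/-! ### Chase variants, derivations, chase termination classes -/

inductive ChaseVariant : Type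
  | O | SO | R | E
deriving DecidableEq

def Applicable : ChaseVariant → Trigger → Set Atom → Prop
  | .O, t, J => ¬ ((t.out : Set Atom) ⊆ J)
  | .SO, t, J => ∀ t' : Trigger, t'.rule = t.rule → t'.isOn J →
      (∀ v ∈ frontierOf t.rule, t'.sub v = t.sub v) → ¬ ((t'.out : Set Atom) ⊆ J)
  | .R, t, J => ¬ ∃ σ : Subst, IsRetraction σ (J ∪ (t.out : Set Atom)) J
  | .E, t, J => ¬ ∃ σ : Subst, IsHomOn σ (J ∪ (t.out : Set Atom)) J

def instSeq (I : Set Atom) (steps : ℕ → Option Trigger) : ℕ → Set Atom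
  | 0 => I
  | n + 1 => instSeq I steps n ∪
      (match steps n with
        | none => (∅ : Set Atom)
        | some t => (t.out : Set Atom))

/-- A (possibly infinite) derivation from the knowledge base `⟨Rset, I⟩`. -/
structure Deriv (Rset : Finset Rule) (I : Set Atom) where
  steps : ℕ → Option Trigger
  prefix_closed : ∀ n, steps n = none → steps (n + 1) = none
  valid : ∀ n t, steps n = some t →
    t.rule ∈ Rset ∧ t.isOn (instSeq I steps n) ∧ ¬ ((t.out : Set Atom) ⊆ instSeq I steps n)

def Deriv.inst {Rset : Finset Rule} {I : Set Atom} (D : Deriv Rset I) (n : ℕ) :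
    Set Atom := instSeq I D.steps n

def Deriv.res {Rset : Finset Rule} {I : Set Atom} (D : Deriv Rset I) : Set Atom :=
  ⋃ n, D.inst n

def Deriv.Finite {Rset : Finset Rule} {I : Set Atom} (D : Deriv Rset I) : Prop :=
  ∃ n, D.steps n = none

def Deriv.IsX {Rset : Finset Rule} {I : Set Atom} (X : ChaseVariant)
    (D : Deriv Rset I) : Prop :=
  ∀ n t, D.steps n = some t → Applicable X t (D.inst n)

def Deriv.Fair {Rset : Finset Rule} {I : Set Atom} (X : ChaseVariant)
    (D : Deriv Rset I) : Prop :=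
  ∀ i, ∀ t : Trigger, t.rule ∈ Rset → t.isOn (D.inst i) → Applicable X t (D.inst i) →
    ∃ j, i < j ∧ ¬ Applicable X t (D.inst j)

/-- All-instance, all-derivation chase termination. -/
def CTall (X : ChaseVariant) (Rset : Finset Rule) : Prop :=
  ∀ I : Finset Atom, ∀ D : Deriv Rset (I : Set Atom), D.IsX X → D.Fair X → D.Finite

/-- All-instance, some-derivation chase termination. -/
def CTex (X : ChaseVariant) (Rset : Finset Rule) : Prop :=
  ∀ I : Finset Atom, ∃ D : Deriv Rset (I : Set Atom), D.IsX X ∧ D.Fair X ∧ D.Finite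

inductive CTQuant : Type
  | all | ex

def CT (X : ChaseVariant) : CTQuant → Finset Rule → Prop
  | .all => CTall X
  | .ex => CTex X

/-- The result of some fair `X`-derivation from `⟨Rset, J⟩`. -/
def ChX (X : ChaseVariant) (Rset : Finset Rule) (J : Set Atom) : Set Atom :=
  if h : ∃ D : Deriv Rset J, D.IsX X ∧ D.Fair X then h.choose.res else J

/-! ### Gaifman graph, treewidth, bts -/

def gaifmanAdj (J : Set Atom) (u v : FTerm) : Prop :=
  u ≠ v ∧ ∃ a ∈ J, u ∈ a.2 ∧ v ∈ a.2

/-- The (Gaifman graph of the) atom set `J` has treewidth at most `k`: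
there is a tree decomposition all of whose bags have size at most `k + 1`. -/
def TreewidthAtMost (J : Set Atom) (k : ℕ) : Prop :=
  ∃ (ι : Type) (T : SimpleGraph ι) (bag : ι → Finset FTerm),
    T.Connected ∧ T.IsAcyclic ∧
    (∀ v ∈ adom J, ∃ i, v ∈ bag i) ∧
    (∀ u v : FTerm, gaifmanAdj J u v → ∃ i, u ∈ bag i ∧ v ∈ bag i) ∧
    (∀ v : FTerm, (SimpleGraph.induce {i | v ∈ bag i} T).Preconnected) ∧
    (∀ i, (bag i).card ≤ k + 1)

/-- Bounded-treewidth sets: for every instance, some universal model of bounded treewidth. -/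
def IsBts (Rset : Finset Rule) : Prop :=
  ∀ I : Finset Atom, ∃ (k : ℕ) (U : Set Atom),
    IsUniversalModel Rset (I : Set Atom) U ∧ TreewidthAtMost U k

/-! ### Three-counter machines -/

/-- A three-counter machine: states `0, …, m − 1` (state `0` is initial, standing for `q₁`),
and a partial transition function given by a finite table. -/
structure TCM where
  m : ℕ
  hm : 0 < m
  δ : List ((ℕ × Bool × Bool) × (ℕ × Int × Int))
  keys_nodup : (δ.map Prod.fst).Nodup
  wf : ∀ e ∈ δ, e.1.1 < m ∧ e.2.1 < m ∧ e.2.2.1.natAbs ≤ 1 ∧ e.2.2.2.natAbs ≤ 1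

/-- A configuration: state, two counters, and the time counter. -/
abbrev Config : Type := ℕ × ℕ × ℕ × ℕ

def TCM.step (M : TCM) (q : ℕ) (b1 b2 : Bool) : Option (ℕ × Int × Int) :=
  (M.δ.find? fun e => decide (e.1 = (q, b1, b2))).map Prod.snd

def TCM.next (M : TCM) (C : Config) : Option Config :=
  match M.step C.1 (decide (C.2.1 ≠ 0)) (decide (C.2.2.1 ≠ 0)) with
  | none => none
  | some (q', d1, d2) =>
      some (q', ((C.2.1 : ℤ) + d1).toNat, ((C.2.2.1 : ℤ) + d2).toNat, C.2.2.2 + 1)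

def TCM.run (M : TCM) : ℕ → Option Config
  | 0 => some (0, 0, 0, 0)
  | n + 1 => (M.run n).bind M.next

/-- The machine halts: some reachable configuration has no successor. -/
def TCM.Halts (M : TCM) : Prop := ∃ n C, M.run n = some C ∧ M.next C = none

/-! ### Prime encoding of configurations -/

/-- The least prime strictly greater than `n` (computably). -/
def nextPrime (n : ℕ) : ℕ := Nat.find (Nat.exists_infinite_primes (n + 1))

/-- `prm i` is the `(i+1)`-st prime `p_{i+1}`, i.e. `prm 0 = 2`. -/
def prm : ℕ → ℕ
  | 0 => 2
  | k + 1 => nextPrime (prm k)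

/-- Encoding of a configuration as a natural number. -/
def TCM.enc (M : TCM) (C : Config) : ℕ :=
  prm C.1 * prm M.m ^ C.2.1 * prm (M.m + 1) ^ C.2.2.1 * prm (M.m + 2) ^ C.2.2.2

/-- `p = p₁ ⋯ p_{m+3}`. -/
def TCM.p (M : TCM) : ℕ := ∏ i ∈ Finset.range (M.m + 3), prm i

/-- Decode the state from a residue modulo `M.p`. -/
def TCM.stateOf (M : TCM) (i : ℕ) : Option ℕ :=
  (List.range M.m).find? fun s => decide (prm s ∣ i)

/-- The canonical pair `(q_i, r_i)` realizing the prime encoding of the transitions. -/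
def TCM.qr (M : TCM) (i : ℕ) : ℕ × ℕ :=
  match M.stateOf i with
  | none => (1, 1)
  | some s =>
      let b1 : Bool := decide (prm M.m ∣ i)
      let b2 : Bool := decide (prm (M.m + 1) ∣ i)
      match M.step s b1 b2 with
      | none => (1, 1)
      | some (s', d1, d2) =>
          let e1 : ℤ := if b1 then d1 else max d1 0
          let e2 : ℤ := if b2 then d2 else max d2 0
          let num : ℕ := prm s' * prm (M.m + 2) *
            (if e1 = 1 then prm M.m else 1) * (if e2 = 1 then prm (M.m + 1) else 1)
          let den : ℕ := prm s *
            (if e1 = -1 then prm M.m else 1) * (if e2 = -1 then prm (M.m + 1) else 1)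
          (num / Nat.gcd num den, den / Nat.gcd num den)

def TCM.qi (M : TCM) (i : ℕ) : ℕ := (M.qr i).1
def TCM.ri (M : TCM) (i : ℕ) : ℕ := (M.qr i).2

/-- `g(n) = q_{n mod p} · n / r_{n mod p}`. -/
def TCM.g (M : TCM) (n : ℕ) : ℕ := M.qi (n % M.p) * n / M.ri (n % M.p)

/-- `gᵏ(2)`. -/
def TCM.gIter (M : TCM) (k : ℕ) : ℕ := (M.g)^[k] 2

/-- `G = {gᵏ(2) : k ∈ ℕ}`. -/
def TCM.Gset (M : TCM) : Set ℕ := Set.range M.gIter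

/-! ### The rule set `R_M` -/

def pEnd : ℕ := 0
def pFlood : ℕ := 1
def pS0 : ℕ := 2
def pS : ℕ := 3
def pG : ℕ := 4
def pR (i : ℕ) : ℕ := 5 + 2 * i
def pT (i : ℕ) : ℕ := 6 + 2 * i

/-- `j`-th vertex of an `S`-path of length `n` from variable `a` to variable `b`
with fresh intermediate variables `base + 1, …, base + n − 1`. -/
def pathVar (a b base n j : ℕ) : FTerm :=
  if j = 0 then vt a else if j = n then vt b else vt (base + j)

/-- The atoms of `Sⁿ(x_a, x_b)`: an `S`-path of length `n`. -/
def spath (a b base n : ℕ) : Finset Atom :=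
  (Finset.range n).image fun j =>
    (pS, [pathVar a b base n j, pathVar a b base n (j + 1)])

/-- Rule (1): `S₀(x,y) → S(x,y)`. -/
def ruleS : Rule := ({(pS0, [vt 0, vt 1])}, {(pS, [vt 0, vt 1])})

/-- Rule (2): `R_i(x,y) ∧ S(y,z) → R_{i+1}(x,z)` (indices modulo `p`). -/
def ruleR (M : TCM) (i : ℕ) : Rule :=
  ({(pR i, [vt 0, vt 1]), (pS, [vt 1, vt 2])}, {(pR ((i + 1) % M.p), [vt 0, vt 2])})

/-- Rule (3): `T_i(x,y,z) ∧ S^{r_i}(y,y′) ∧ S^{q_i}(z,z′) → T_i(x,y′,z′)`. -/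
def ruleT (M : TCM) (i : ℕ) : Rule :=
  (({(pT i, [vt 0, vt 1, vt 2])} : Finset Atom) ∪ spath 1 3 10 (M.ri i) ∪
      spath 2 4 (11 + M.ri i) (M.qi i),
    {(pT i, [vt 0, vt 3, vt 4])})

/-- Rule (4): `S(x,y) → Flood(y)`. -/
def ruleFloodProp : Rule := ({(pS, [vt 0, vt 1])}, {(pFlood, [vt 1])})

/-- Rule (5): `End(x) → S(x,x)`. -/
def ruleSEnd : Rule := ({(pEnd, [vt 0])}, {(pS, [vt 0, vt 0])})

/-- Rule (6): `S²(x,y) → G(x,y)`. -/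
def ruleGInit : Rule := (spath 0 1 10 2, {(pG, [vt 0, vt 1])})

/-- Rule (7): `G(x,y) ∧ R_i(x,y) ∧ T_i(x,y,z) → G(x,z)`. -/
def ruleGStep (i : ℕ) : Rule :=
  ({(pG, [vt 0, vt 1]), (pR i, [vt 0, vt 1]), (pT i, [vt 0, vt 1, vt 2])},
    {(pG, [vt 0, vt 2])})

/-- Rule (8): `Flood(x) ∧ Flood(y) ∧ Flood(z) → G(x,y) ∧ ⋀_{j<p} (R_j(x,y) ∧ T_j(x,y,z))`. -/
def ruleFloodGen (M : TCM) : Rule :=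
  ({(pFlood, [vt 0]), (pFlood, [vt 1]), (pFlood, [vt 2])},
    ({(pG, [vt 0, vt 1])} : Finset Atom) ∪
      (Finset.range M.p).biUnion fun j =>
        {(pR j, [vt 0, vt 1]), (pT j, [vt 0, vt 1, vt 2])})

/-- Rule (9): `G(y,z) ∧ End(z) → ∃x (S₀(x,y) ∧ R₀(x,x) ∧ ⋀_{j<p} T_j(x,x,x))`. -/
def ruleEx (M : TCM) : Rule :=
  ({(pG, [vt 1, vt 2]), (pEnd, [vt 2])},
    ({(pS0, [vt 0, vt 1]), (pR 0, [vt 0, vt 0])} : Finset Atom) ∪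
      (Finset.range M.p).biUnion fun j => {(pT j, [vt 0, vt 0, vt 0])})

/-- The rule set `R_M`. -/
def RM (M : TCM) : Finset Rule :=
  ({ruleS, ruleFloodProp, ruleSEnd, ruleGInit, ruleFloodGen M, ruleEx M} : Finset Rule) ∪
    (Finset.range M.p).biUnion fun i => {ruleR M i, ruleT M i, ruleGStep i}

/-- The alternating Datalog/non-Datalog chase steps `Step^X_n`. -/
def StepX (X : ChaseVariant) (M : TCM) : ℕ → Set Atom → Set Atom
  | 0, I => ChX X (DatRules (RM M)) I
  | n + 1, I => ChX X (DatRules (RM M)) (ChX X (NDatRules (RM M)) (StepX X M n I))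

/-- The constant `w`, the "well of positivity". -/
def wC : FTerm := ct 0

/-- The instance `{End(w)}`. -/
def IE : Set Atom := {(pEnd, [wC])}

/-- Membership in the signature of `R_M` (predicate together with its arity). -/
def InSig (M : TCM) (a : Atom) : Prop :=
  ((a.1 = pEnd ∨ a.1 = pFlood) ∧ a.2.length = 1) ∨
  ((a.1 = pS0 ∨ a.1 = pS ∨ a.1 = pG ∨ ∃ i < M.p, a.1 = pR i) ∧ a.2.length = 2) ∨
  ((∃ i < M.p, a.1 = pT i) ∧ a.2.length = 3)

/-- The critical instance: all atoms `P(w, …, w)` over the signature of `R_M`. -/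
def Crit (M : TCM) : Set Atom := {a | InSig M a ∧ ∀ t ∈ a.2, t = wC}

/-- An `S`-path of length `k` from `s` to `t` in `J`. -/
def SPath (J : Set Atom) : ℕ → FTerm → FTerm → Prop
  | 0, s, t => s = t
  | k + 1, s, t => ∃ u, (pS, [s, u]) ∈ J ∧ SPath J k u t

/-- The restriction `J|_S`: atoms of `J` all of whose terms belong to `S`. -/
def restrictTo (J : Set Atom) (S : Set FTerm) : Set Atom := {a ∈ J | ∀ t ∈ a.2, t ∈ S}

/-- An explicit injective encoding of three-counter machines by natural numbers. -/
def encodeTCM (M : TCM) : ℕ := Encodable.encode (M.m, M.δ)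

/-!
Let `J` be the last instance of a fair and finite `X`-derivation. No trigger is `X`-applicable on
`J`, and for each of the four variants this means that the output of every trigger maps into `J`
under some endomorphism of `J` (for the semi-oblivious chase because fresh variables are named
after their trigger). Endomorphisms fix the constant `w`, so facts can be derived in `J` up to an
endomorphism.

Start from an `S₀`-chain `w = φ 0 ← φ 1 ← ⋯ ← φ n` with `R₀` and all `T_j` looping at its top.
Rules (6), (2), (3), (7) derive `G(φ n, φ (n - gᵏ(2)))` for every `k`: walking `v` steps down the
chain computes `R_{v mod p}`, and rule (3) then rescales `v` by `q_i / r_i`, as `g` does. Since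
`M` does not halt, `gᵏ(2) = enc(C_k)` eventually exceeds `n`, which gives `G(φ n, w)`, and rule (9)
followed by rule (1) extends the chain by one element. So `J` contains chains of every length.
But `S₀`-atoms only come from rule (9), with a fresh first argument, so `S₀` is functional and
never starts at `w`; hence the elements of a chain are pairwise distinct, and `J` would be
infinite.
-/

/-! ### The prime encoding of the machine -/

lemma prm_prime : ∀ k, (prm k).Prime
  | 0 => Nat.prime_two
  | k + 1 => (Nat.find_spec (Nat.exists_infinite_primes (prm k + 1))).2

lemma prm_lt_prm_succ (k : ℕ) : prm k < prm (k + 1) :=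
  (Nat.find_spec (Nat.exists_infinite_primes (prm k + 1))).1

lemma prm_injective : Function.Injective prm :=
  (strictMono_nat_of_lt_succ prm_lt_prm_succ).injective

lemma prm_pos (k : ℕ) : 0 < prm k := (prm_prime k).pos

lemma prm_dvd_prm_pow_iff {k l a : ℕ} : prm k ∣ prm l ^ a ↔ k = l ∧ a ≠ 0 := by
  constructor
  · intro h
    have hkl := (Nat.prime_dvd_prime_iff_eq (prm_prime k) (prm_prime l)).1
      ((prm_prime k).dvd_of_dvd_pow h)
    refine ⟨prm_injective hkl, ?_⟩
    rintro rfl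
    exact (prm_prime k).one_lt.ne' (Nat.dvd_one.1 h)
  · rintro ⟨rfl, ha⟩
    exact dvd_pow_self _ ha

lemma mul_div_gcd_eq_div_gcd_mul {a b x y : ℕ} (h : x * b = a * y) :
    x * (b / Nat.gcd a b) = a / Nat.gcd a b * y := by
  rcases Nat.eq_zero_or_pos (Nat.gcd a b) with hg | hg
  · simp [hg]
  apply Nat.eq_of_mul_eq_mul_right hg
  rw [mul_assoc, Nat.div_mul_cancel (Nat.gcd_dvd_right a b), mul_right_comm,
    Nat.div_mul_cancel (Nat.gcd_dvd_left a b), h]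

/-- How one counter of `next` is read off `q_i / r_i`: the factor `P^e` with `e = ±1`, where a
decrement of a zero counter is ignored (`max d 0`). -/
lemma pow_toNat_add_mul_ite (P a : ℕ) {d e : ℤ} (hd : d.natAbs ≤ 1)
    (he : e = if a = 0 then max d 0 else d) :
    P ^ ((a : ℤ) + d).toNat * (if e = -1 then P else 1) = P ^ a * (if e = 1 then P else 1) := by
  subst he
  rcases Nat.eq_zero_or_pos a with rfl | ha
  · rcases (by omega : d = -1 ∨ d = 0 ∨ d = 1) with rfl | rfl | rfl <;> simp
  · obtain ⟨a, rfl⟩ := Nat.exists_eq_add_one.2 ha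
    rcases (by omega : d = -1 ∨ d = 0 ∨ d = 1) with rfl | rfl | rfl <;>
      simp [pow_succ, show ((a : ℤ) + 1 + 1).toNat = a + 2 by omega]

namespace TCM

variable {M : TCM}

lemma p_pos (M : TCM) : 0 < M.p := Finset.prod_pos fun i _ => prm_pos i

lemma prm_dvd_mod_p_iff (M : TCM) {l : ℕ} (hl : l < M.m + 3) (n : ℕ) :
    prm l ∣ n % M.p ↔ prm l ∣ n :=
  Nat.dvd_mod_iff (Finset.dvd_prod_of_mem prm (Finset.mem_range.2 hl))

lemma prm_dvd_enc_iff (C : Config) (l : ℕ) :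
    prm l ∣ M.enc C ↔ l = C.1 ∨ (l = M.m ∧ C.2.1 ≠ 0) ∨ (l = M.m + 1 ∧ C.2.2.1 ≠ 0) ∨
      (l = M.m + 2 ∧ C.2.2.2 ≠ 0) := by
  have hp := prm_prime l
  simp only [TCM.enc, hp.dvd_mul, prm_dvd_prm_pow_iff,
    Nat.prime_dvd_prime_iff_eq hp (prm_prime _), prm_injective.eq_iff]
  tauto

lemma stateOf_enc_mod {C : Config} (hC : C.1 < M.m) : M.stateOf (M.enc C % M.p) = some C.1 := by
  simp only [TCM.stateOf, List.find?_range_eq_some, List.mem_range, decide_eq_true_eq,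
    Bool.not_eq_true', decide_eq_false_iff_not]
  refine ⟨?_, hC, fun j hj => ?_⟩ <;>
    rw [M.prm_dvd_mod_p_iff (by omega), prm_dvd_enc_iff] <;> omega

lemma prm_m_dvd_enc_mod_iff {C : Config} (hC : C.1 < M.m) :
    prm M.m ∣ M.enc C % M.p ↔ C.2.1 ≠ 0 := by
  rw [M.prm_dvd_mod_p_iff (by omega), prm_dvd_enc_iff]
  omega

lemma prm_m_succ_dvd_enc_mod_iff {C : Config} (hC : C.1 < M.m) :
    prm (M.m + 1) ∣ M.enc C % M.p ↔ C.2.2.1 ≠ 0 := by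
  rw [M.prm_dvd_mod_p_iff (by omega), prm_dvd_enc_iff]
  omega

lemma step_wf {s s' : ℕ} {b₁ b₂ : Bool} {d₁ d₂ : ℤ} (h : M.step s b₁ b₂ = some (s', d₁, d₂)) :
    s' < M.m ∧ d₁.natAbs ≤ 1 ∧ d₂.natAbs ≤ 1 := by
  obtain ⟨e, he, hes⟩ := Option.map_eq_some_iff.1 h
  have := (M.wf e (List.mem_of_find?_eq_some he)).2
  rwa [hes] at this

lemma next_wf {C C' : Config} (h : M.next C = some C') :
    C'.1 < M.m ∧ C'.2.2.2 = C.2.2.2 + 1 := by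
  unfold TCM.next at h
  rcases hst : M.step C.1 (decide (C.2.1 ≠ 0)) (decide (C.2.2.1 ≠ 0)) with _ | ⟨s', d₁, d₂⟩
  · rw [hst] at h; cases h
  rw [hst, Option.some.injEq] at h
  subst h
  exact ⟨(step_wf hst).1, rfl⟩

lemma qi_pos_ri_pos_coprime (i : ℕ) :
    0 < M.qi i ∧ 0 < M.ri i ∧ Nat.Coprime (M.qi i) (M.ri i) := by
  have hreduce : ∀ a b : ℕ, 0 < a → 0 < b → 0 < a / Nat.gcd a b ∧ 0 < b / Nat.gcd a b ∧
      Nat.Coprime (a / Nat.gcd a b) (b / Nat.gcd a b) := fun a b ha hb =>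
    have hg := Nat.gcd_pos_of_pos_left b ha
    ⟨Nat.div_pos (Nat.le_of_dvd ha (Nat.gcd_dvd_left a b)) hg,
      Nat.div_pos (Nat.le_of_dvd hb (Nat.gcd_dvd_right a b)) hg, Nat.coprime_div_gcd_div_gcd hg⟩
  have hprm : ∀ k, prm k ≠ 0 := fun k => (prm_prime k).ne_zero
  unfold TCM.qi TCM.ri TCM.qr
  split
  · simp
  dsimp only
  split
  · simp
  exact hreduce _ _ (by split_ifs <;> simp [Nat.pos_iff_ne_zero, hprm])
    (by split_ifs <;> simp [Nat.pos_iff_ne_zero, hprm])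

lemma enc_next_mul_ri {C C' : Config} (hC : C.1 < M.m) (h : M.next C = some C') :
    M.enc C' * M.ri (M.enc C % M.p) = M.qi (M.enc C % M.p) * M.enc C := by
  obtain ⟨s, a, b, t⟩ := C
  unfold TCM.next at h
  rcases hst : M.step s (decide (a ≠ 0)) (decide (b ≠ 0)) with _ | ⟨s', d₁, d₂⟩
  · rw [hst] at h; cases h
  rw [hst, Option.some.injEq] at h
  subst h
  obtain ⟨-, hd₁, hd₂⟩ := step_wf hst
  simp only [TCM.ri, TCM.qi, TCM.qr, M.stateOf_enc_mod hC, prm_m_dvd_enc_mod_iff hC,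
    prm_m_succ_dvd_enc_mod_iff hC, hst]
  apply mul_div_gcd_eq_div_gcd_mul
  have h₁ := pow_toNat_add_mul_ite (prm M.m) a hd₁
    (e := if decide (a ≠ 0) = true then d₁ else max d₁ 0) (by simp)
  have h₂ := pow_toNat_add_mul_ite (prm (M.m + 1)) b hd₂
    (e := if decide (b ≠ 0) = true then d₂ else max d₂ 0) (by simp)
  simp only [TCM.enc]
  linear_combination (prm s' * prm s * prm (M.m + 2) ^ (t + 1)) * congrArg₂ (· * ·) h₁ h₂

lemma g_enc_of_next {C C' : Config} (hC : C.1 < M.m) (h : M.next C = some C') :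
    M.g (M.enc C) = M.enc C' := by
  rw [TCM.g, ← enc_next_mul_ri hC h, Nat.mul_div_cancel _ (qi_pos_ri_pos_coprime _).2.1]

lemma exists_run_eq_of_not_halts (hM : ¬ M.Halts) (k : ℕ) :
    ∃ C, M.run k = some C ∧ C.1 < M.m ∧ C.2.2.2 = k ∧ M.gIter k = M.enc C := by
  induction k with
  | zero => exact ⟨(0, 0, 0, 0), rfl, M.hm, rfl, by simp [TCM.gIter, TCM.enc, prm]⟩
  | succ k ih =>
    obtain ⟨C, hrun, hC, htime, hg⟩ := ih
    obtain ⟨C', hC'⟩ := Option.ne_none_iff_exists'.1 fun h => hM ⟨k, C, hrun, h⟩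
    refine ⟨C', by simp [TCM.run, hrun, hC'], (next_wf hC').1, by rw [(next_wf hC').2, htime], ?_⟩
    rw [TCM.gIter, Function.iterate_succ_apply', ← TCM.gIter, hg, g_enc_of_next hC hC']

lemma lt_gIter_of_not_halts (hM : ¬ M.Halts) (k : ℕ) : k < M.gIter k := by
  obtain ⟨C, -, -, rfl, hg⟩ := exists_run_eq_of_not_halts hM k
  have hdvd : prm (M.m + 2) ^ C.2.2.2 ∣ M.enc C := dvd_mul_left _ _
  calc C.2.2.2 < 2 ^ C.2.2.2 := Nat.lt_two_pow_self
    _ ≤ prm (M.m + 2) ^ C.2.2.2 := Nat.pow_le_pow_left (prm_prime _).two_le _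
    _ ≤ M.gIter C.2.2.2 := hg ▸ Nat.le_of_dvd (by simp [TCM.enc, prm_pos]) hdvd

lemma ri_dvd_gIter (hM : ¬ M.Halts) (k : ℕ) : M.ri (M.gIter k % M.p) ∣ M.gIter k := by
  obtain ⟨C, hrun, hC, -, hg⟩ := exists_run_eq_of_not_halts hM k
  obtain ⟨C', hC'⟩ := Option.ne_none_iff_exists'.1 fun h => hM ⟨k, C, hrun, h⟩
  rw [hg]
  exact (qi_pos_ri_pos_coprime _).2.2.symm.dvd_of_dvd_mul_left
    ⟨M.enc C', by rw [← enc_next_mul_ri hC hC', mul_comm]⟩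

lemma gIter_succ_of_not_halts (hM : ¬ M.Halts) (k : ℕ) :
    M.gIter (k + 1) = M.gIter k / M.ri (M.gIter k % M.p) * M.qi (M.gIter k % M.p) := by
  rw [TCM.gIter, Function.iterate_succ_apply', ← TCM.gIter, TCM.g, mul_comm,
    Nat.mul_div_right_comm (ri_dvd_gIter hM k)]

end TCM

/-! ### Substitutions, triggers and derivations -/

lemma applyA_eq_self {σ : Subst} {a : Atom} (h : ∀ v, Sum.inr v ∈ a.2 → σ v = Sum.inr v) :
    applyA σ a = a := by
  refine Prod.ext rfl ((List.map_congr_left fun t ht => ?_).trans a.2.map_id)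
  cases t with
  | inl c => rfl
  | inr v => exact h v ht

lemma applyT_inr (t : FTerm) : applyT Sum.inr t = t := by cases t <;> rfl

lemma applyA_inr (a : Atom) : applyA Sum.inr a = a := applyA_eq_self fun _ _ => rfl

def Subst.comp (σ τ : Subst) : Subst := fun v => applyT σ (τ v)

def Subst.ofFun (f : ℕ → FTerm) : Subst := Sum.elim f fun _ => wC

lemma applyT_comp (σ τ : Subst) (t : FTerm) :
    applyT (σ.comp τ) t = applyT σ (applyT τ t) := by
  cases t <;> rfl

lemma applyA_comp (σ τ : Subst) (a : Atom) :
    applyA (σ.comp τ) a = applyA σ (applyA τ a) := by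
  simp [applyA, applyT_comp]

section IsHomOn

variable {σ τ : Subst} {A B C J : Set Atom}

lemma isHomOn_inr_iff : IsHomOn Sum.inr A B ↔ A ⊆ B := by
  simp only [IsHomOn, applyA_inr, Set.subset_def]

lemma isHomOn_self_of_eq_inr (h : ∀ v ∈ setVars J, σ v = Sum.inr v) : IsHomOn σ J J :=
  fun a ha => by rwa [applyA_eq_self fun v hv => h v ⟨a, ha, hv⟩]

lemma IsHomOn.comp (hσ : IsHomOn σ B C) (hτ : IsHomOn τ A B) : IsHomOn (σ.comp τ) A C :=
  fun a ha => by
    rw [applyA_comp]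
    exact hσ _ (hτ a ha)

lemma IsHomOn.mono_left (h : IsHomOn σ A B) {A' : Set Atom} (hA : A' ⊆ A) : IsHomOn σ A' B :=
  fun a ha => h a (hA ha)

lemma isHomOn_singleton_iff {a : Atom} : IsHomOn σ ↑({a} : Finset Atom) J ↔ applyA σ a ∈ J := by
  simp [IsHomOn]

lemma isHomOn_insert_iff {a : Atom} {A : Finset Atom} :
    IsHomOn σ ↑(insert a A) J ↔ applyA σ a ∈ J ∧ IsHomOn σ ↑A J := by
  simp [IsHomOn]

lemma isHomOn_union_iff {A B : Finset Atom} :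
    IsHomOn σ ↑(A ∪ B) J ↔ IsHomOn σ ↑A J ∧ IsHomOn σ ↑B J := by
  simp only [IsHomOn, Finset.coe_union, Set.mem_union, or_imp, forall_and]

end IsHomOn

lemma mem_atomVarsF {a : Atom} {v : Var} : v ∈ atomVarsF a ↔ Sum.inr v ∈ a.2 := by
  simp only [atomVarsF, List.mem_toFinset, List.mem_filterMap]
  constructor
  · rintro ⟨_ | u, ht, hu⟩ <;> simp_all [Sum.getRight?]
  · exact fun h => ⟨Sum.inr v, h, rfl⟩

lemma mem_varsF {A : Finset Atom} {v : Var} : v ∈ varsF A ↔ ∃ a ∈ A, Sum.inr v ∈ a.2 := by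
  simp only [varsF, Finset.mem_biUnion, mem_atomVarsF]

lemma varsF_mono {A B : Finset Atom} (h : A ⊆ B) : varsF A ⊆ varsF B :=
  Finset.biUnion_subset_biUnion_of_subset_left _ h

namespace Trigger

variable {t t' : Trigger} {J : Set Atom} {v : Var}

lemma extSub_of_mem (hv : v ∈ varsF t.rule.1) : t.extSub v = t.sub v := if_pos hv

lemma extSub_of_not_mem (hv : v ∉ varsF t.rule.1) :
    t.extSub v = Sum.inr (Sum.inr (t.code, Encodable.encode v)) := if_neg hv

lemma applyA_extSub_mem_out {h : Atom} (hh : h ∈ t.rule.2) : applyA t.extSub h ∈ t.out :=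
  Finset.mem_image_of_mem _ hh

lemma applyA_extSub_of_subset {h : Atom} (hsub : atomVarsF h ⊆ varsF t.rule.1) :
    applyA t.extSub h = applyA t.sub h := by
  refine Prod.ext rfl (List.map_congr_left fun u hu => ?_)
  cases u with
  | inl c => rfl
  | inr v => exact extSub_of_mem (hsub (mem_atomVarsF.2 hu))

lemma mem_setVars_of_isOn (hon : t.isOn J) (hv : v ∈ varsF t.rule.1) {u : Var}
    (hu : t.sub v = Sum.inr u) : u ∈ setVars J := by
  obtain ⟨b, hb, hvb⟩ := mem_varsF.1 hv
  exact ⟨applyA t.sub b, hon b hb, List.mem_map.2 ⟨Sum.inr v, hvb, hu⟩⟩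

lemma rule_eq_and_sub_eq_of_code_eq (h : t.code = t'.code) :
    t.rule = t'.rule ∧ ∀ v ∈ varsF t.rule.1, t.sub v = t'.sub v := by
  obtain ⟨hrule, hsub⟩ := Prod.ext_iff.1 (Encodable.encode_injective h)
  refine ⟨hrule, fun v hv => ?_⟩
  have hsub : (varsF t.rule.1).image (fun v => (v, t.sub v)) =
      (varsF t'.rule.1).image fun v => (v, t'.sub v) := hsub
  obtain ⟨u, -, hu⟩ := Finset.mem_image.1 (hsub ▸ Finset.mem_image_of_mem _ hv)
  obtain ⟨rfl, h⟩ := Prod.ext_iff.1 hu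
  exact h.symm

lemma out_eq_of_code_eq (h : t.code = t'.code) : t.out = t'.out := by
  obtain ⟨hrule, hsub⟩ := rule_eq_and_sub_eq_of_code_eq h
  have hext : t.extSub = t'.extSub := by
    funext v
    by_cases hv : v ∈ varsF t.rule.1
    · rw [extSub_of_mem hv, extSub_of_mem (hrule ▸ hv), hsub v hv]
    · rw [extSub_of_not_mem hv, extSub_of_not_mem (hrule ▸ hv), h]
  rw [Trigger.out, Trigger.out, hrule, hext]

/-- Undoes the naming `(t.code, encode v)` of the fresh variables of `t`, sending them to their
images under `t'`. -/
def renameFresh (t t' : Trigger) : Subst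
  | Sum.inl n => Sum.inr (Sum.inl n)
  | Sum.inr (c, k) =>
      if c = t.code then (Encodable.decode k : Option Var).elim (Sum.inr (Sum.inr (c, k))) t'.extSub
      else Sum.inr (Sum.inr (c, k))

lemma renameFresh_extSub_of_not_mem (hv : v ∉ varsF t.rule.1) :
    applyT (t.renameFresh t') (t.extSub v) = t'.extSub v := by
  simp [extSub_of_not_mem hv, applyT, renameFresh]

lemma renameFresh_of_mem_setVars (hfresh : ∀ k, Sum.inr (t.code, k) ∉ setVars J) {u : Var}
    (hu : u ∈ setVars J) : t.renameFresh t' u = Sum.inr u := by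
  rcases u with n | ⟨c, k⟩
  · rfl
  · have hc : c ≠ t.code := by rintro rfl; exact hfresh k hu
    simp [renameFresh, hc]

lemma exists_endo_of_frontier_eq (hrule : t'.rule = t.rule) (hon : t.isOn J)
    (hfr : ∀ v ∈ frontierOf t.rule, t'.sub v = t.sub v) (hout' : ↑t'.out ⊆ J)
    (hfresh : ∀ k, Sum.inr (t.code, k) ∉ setVars J) :
    ∃ H, IsHomOn H J J ∧ IsHomOn H t.out J := by
  refine ⟨t.renameFresh t',
    isHomOn_self_of_eq_inr fun u hu => renameFresh_of_mem_setVars hfresh hu, ?_⟩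
  rintro _ ha
  obtain ⟨h, hh, rfl⟩ := Finset.mem_image.1 ha
  suffices applyA (t.renameFresh t') (applyA t.extSub h) = applyA t'.extSub h from
    this ▸ hout' (applyA_extSub_mem_out (hrule ▸ hh))
  rw [← applyA_comp]
  refine Prod.ext rfl (List.map_congr_left fun u hu => ?_)
  rcases u with c | v
  · rfl
  by_cases hv : v ∈ varsF t.rule.1
  · have hvfr : v ∈ frontierOf t.rule := Finset.mem_inter.2 ⟨hv, mem_varsF.2 ⟨h, hh, hu⟩⟩
    change applyT _ (t.extSub v) = t'.extSub v
    rw [extSub_of_mem hv, extSub_of_mem (hrule ▸ hv), hfr v hvfr]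
    rcases hsv : t.sub v with c | w
    · rfl
    · exact renameFresh_of_mem_setVars hfresh (mem_setVars_of_isOn hon hv hsv)
  · exact renameFresh_extSub_of_not_mem hv

lemma exists_endo_of_not_applicable {X : ChaseVariant} (hon : t.isOn J)
    (hX : ¬ Applicable X t J) (hfresh : ∀ k, Sum.inr (t.code, k) ∈ setVars J → ↑t.out ⊆ J) :
    ∃ H, IsHomOn H J J ∧ IsHomOn H t.out J := by
  by_cases hout : ↑t.out ⊆ J
  · exact ⟨Sum.inr, isHomOn_inr_iff.2 le_rfl, isHomOn_inr_iff.2 hout⟩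
  cases X with
  | O => exact absurd (not_not.1 hX) hout
  | SO =>
    simp only [Applicable, not_forall, not_not] at hX
    obtain ⟨t', hrule, -, hfr, hout'⟩ := hX
    exact exists_endo_of_frontier_eq hrule hon hfr hout' fun k hk => hout (hfresh k hk)
  | R =>
    obtain ⟨σ, hσ, -⟩ := not_not.1 hX
    exact ⟨σ, hσ.mono_left Set.subset_union_left, hσ.mono_left Set.subset_union_right⟩
  | E =>
    obtain ⟨σ, hσ⟩ := not_not.1 hX
    exact ⟨σ, hσ.mono_left Set.subset_union_left, hσ.mono_left Set.subset_union_right⟩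

end Trigger

def ClosedUpToEndo (R : Finset Rule) (J : Set Atom) : Prop :=
  ∀ t : Trigger, t.rule ∈ R → t.isOn J → ∃ H : Subst, IsHomOn H J J ∧ IsHomOn H t.out J

lemma ClosedUpToEndo.exists_endo_applyA_mem {R : Finset Rule} {J : Set Atom}
    (hJ : ClosedUpToEndo R J) {r : Rule} (hr : r ∈ R) {σ : Subst} (hσ : IsHomOn σ r.1 J)
    {h : Atom} (hh : h ∈ r.2) (hvars : atomVarsF h ⊆ varsF r.1) :
    ∃ H, IsHomOn H J J ∧ applyA H (applyA σ h) ∈ J := by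
  obtain ⟨H, hH, hout⟩ := hJ ⟨r, σ⟩ hr hσ
  refine ⟨H, hH, ?_⟩
  rw [← Trigger.applyA_extSub_of_subset (t := ⟨r, σ⟩) hvars]
  exact hout _ (Trigger.applyA_extSub_mem_out hh)

lemma instSeq_mono (I : Set Atom) (steps : ℕ → Option Trigger) : Monotone (instSeq I steps) :=
  monotone_nat_of_le_succ fun _ => Set.subset_union_left

namespace Deriv

variable {R : Finset Rule} {I : Set Atom} (D : Deriv R I)

lemma steps_eq_none_of_le {N n : ℕ} (hN : D.steps N = none) (h : N ≤ n) : D.steps n = none := by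
  induction n, h using Nat.le_induction with
  | base => exact hN
  | succ n _ ih => exact D.prefix_closed n ih

lemma inst_eq_of_le {N n : ℕ} (hN : D.steps N = none) (h : N ≤ n) : D.inst n = D.inst N := by
  induction n, h using Nat.le_induction with
  | base => rfl
  | succ n hn ih =>
    change D.inst n ∪ _ = _
    rw [D.steps_eq_none_of_le hN hn, ih, Set.union_empty]

lemma out_subset_inst {k n : ℕ} {t : Trigger} (hk : D.steps k = some t) (hkn : k < n) :
    ↑t.out ⊆ D.inst n := by
  refine subset_trans ?_ (instSeq_mono I D.steps hkn)
  change _ ⊆ D.inst k ∪ _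
  rw [hk]
  exact Set.subset_union_right

lemma mem_inst {n : ℕ} {a : Atom} (ha : a ∈ D.inst n) :
    a ∈ I ∨ ∃ k < n, ∃ t, D.steps k = some t ∧ a ∈ t.out := by
  induction n with
  | zero => exact Or.inl ha
  | succ n ih =>
    rcases ha with ha | ha
    · exact (ih ha).imp_right fun ⟨k, hk, t, hkt, hat⟩ => ⟨k, by omega, t, hkt, hat⟩
    · rcases hn : D.steps n with _ | t
      · simp [hn] at ha
      · rw [hn] at ha
        exact Or.inr ⟨n, by omega, t, hn, ha⟩

lemma finite_adom_inst (hI : I.Finite) (n : ℕ) : (adom (D.inst n)).Finite := by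
  have hfin : (D.inst n).Finite := by
    induction n with
    | zero => exact hI
    | succ n ih =>
      refine ih.union ?_
      rcases D.steps n with _ | t
      exacts [Set.finite_empty, t.out.finite_toSet]
  have : adom (D.inst n) = ⋃ a ∈ D.inst n, {x | x ∈ a.2} := by ext; simp [adom]
  exact this ▸ hfin.biUnion fun a _ => a.2.finite_toSet

/-- A fresh variable of `t` can only have been introduced by an earlier trigger with the same
code, hence with the same output. -/
lemma out_subset_inst_of_fresh_mem (hI : ∀ c k, Sum.inr (c, k) ∉ setVars I) {n : ℕ}
    {t : Trigger} {k : ℕ} (hk : Sum.inr (t.code, k) ∈ setVars (D.inst n)) :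
    ↑t.out ⊆ D.inst n := by
  induction n using Nat.strong_induction_on with
  | _ n ih =>
    obtain ⟨a, ha, hka⟩ := hk
    rcases D.mem_inst ha with haI | ⟨m, hmn, t', hm, hat'⟩
    · exact absurd ⟨a, haI, hka⟩ (hI _ _)
    obtain ⟨h, hh, rfl⟩ := Finset.mem_image.1 hat'
    obtain ⟨_ | v, hv, hvk⟩ := List.mem_map.1 hka
    · cases hvk
    change t'.extSub v = _ at hvk
    by_cases hvb : v ∈ varsF t'.rule.1
    · rw [Trigger.extSub_of_mem hvb] at hvk
      have hon := (D.valid m t' hm).2.1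
      exact (ih m hmn (Trigger.mem_setVars_of_isOn hon hvb hvk)).trans
        (instSeq_mono I D.steps hmn.le)
    · rw [Trigger.extSub_of_not_mem hvb] at hvk
      obtain ⟨hcode, -⟩ := Prod.ext_iff.1 (Sum.inr_injective (Sum.inr_injective hvk))
      rw [Trigger.out_eq_of_code_eq hcode.symm]
      exact D.out_subset_inst hm hmn

lemma closedUpToEndo_inst (hI : ∀ c k, Sum.inr (c, k) ∉ setVars I) {X : ChaseVariant}
    (hFair : D.Fair X) {N : ℕ} (hN : D.steps N = none) : ClosedUpToEndo R (D.inst N) := by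
  intro t hrt hon
  refine Trigger.exists_endo_of_not_applicable (X := X) hon (fun hA => ?_)
    fun k hk => D.out_subset_inst_of_fresh_mem hI hk
  obtain ⟨j, hj, hnA⟩ := hFair N t hrt hon hA
  exact hnA (D.inst_eq_of_le hN hj.le ▸ hA)

end Deriv

/-! ### The rule set `R_M` -/

section RuleSet

variable {M : TCM}

lemma mem_RM_of_lt_p {i : ℕ} (hi : i < M.p) {r : Rule}
    (hr : r ∈ ({ruleR M i, ruleT M i, ruleGStep i} : Finset Rule)) : r ∈ RM M :=
  Finset.mem_union_right _ (Finset.mem_biUnion.2 ⟨i, Finset.mem_range.2 hi, hr⟩)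

lemma eq_ruleEx_of_pS0_mem_head {r : Rule} (hr : r ∈ RM M) {l : List FTerm}
    (hh : (pS0, l) ∈ r.2) : r = ruleEx M ∧ l = [vt 0, vt 1] := by
  have hR : ∀ j, pS0 ≠ pR j := fun j => by simp only [pS0, pR]; omega
  have hT : ∀ j, pS0 ≠ pT j := fun j => by simp only [pS0, pT]; omega
  simp only [RM, Finset.mem_union, Finset.mem_insert, Finset.mem_singleton, Finset.mem_biUnion,
    Finset.mem_range] at hr
  rcases hr with (rfl | rfl | rfl | rfl | rfl | rfl) | ⟨i, -, rfl | rfl | rfl⟩ <;>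
    simp [ruleS, ruleFloodProp, ruleSEnd, ruleGInit, ruleFloodGen, ruleEx, ruleR, ruleT,
      ruleGStep, spath, hR, hT, show pS0 ≠ pS by decide, show pS0 ≠ pFlood by decide,
      show pS0 ≠ pG by decide] at hh ⊢
  exact hh

lemma inl_zero_not_mem_varsF_ruleEx : (Sum.inl 0 : Var) ∉ varsF (ruleEx M).1 := by
  simp [mem_varsF, ruleEx, vt]

lemma inl_one_mem_varsF_ruleEx : (Sum.inl 1 : Var) ∈ varsF (ruleEx M).1 := by
  simp [mem_varsF, ruleEx, vt]

lemma mem_varsF_spath_left {a b base ℓ : ℕ} (hℓ : 0 < ℓ) :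
    (Sum.inl a : Var) ∈ varsF (spath a b base ℓ) :=
  mem_varsF.2 ⟨_, Finset.mem_image_of_mem _ (Finset.mem_range.2 hℓ), by simp [pathVar, vt]⟩

lemma mem_varsF_spath_right {a b base ℓ : ℕ} (hℓ : 0 < ℓ) :
    (Sum.inl b : Var) ∈ varsF (spath a b base ℓ) := by
  obtain ⟨k, rfl⟩ := Nat.exists_eq_add_one.2 hℓ
  exact mem_varsF.2 ⟨_, Finset.mem_image_of_mem _ (Finset.mem_range.2 k.lt_add_one),
    by simp [pathVar, vt]⟩

lemma isHomOn_spath {J : Set Atom} {a b base ℓ : ℕ} {σ : Subst} (c : ℕ → FTerm)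
    (ha : σ (Sum.inl a) = c 0) (hb : σ (Sum.inl b) = c ℓ)
    (hmid : ∀ j, 0 < j → j < ℓ → σ (Sum.inl (base + j)) = c j)
    (hedge : ∀ j < ℓ, (pS, [c j, c (j + 1)]) ∈ J) : IsHomOn σ (spath a b base ℓ) J := by
  have hvert : ∀ j ≤ ℓ, applyT σ (pathVar a b base ℓ j) = c j := by
    intro j hj
    unfold pathVar
    split_ifs with h0 hℓ
    · exact h0 ▸ ha
    · exact hℓ ▸ hb
    · exact hmid j (by omega) (by omega)
  intro _ hat
  obtain ⟨j, hj, rfl⟩ := Finset.mem_image.1 hat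
  rw [Finset.mem_range] at hj
  change (pS, [applyT σ _, applyT σ _]) ∈ J
  rw [hvert j hj.le, hvert (j + 1) hj]
  exact hedge j hj

end RuleSet

namespace Deriv

variable {M : TCM} {I : Set Atom} (D : Deriv (RM M) I)

lemma exists_ruleEx_of_pS0_mem (hI : ∀ a ∈ I, a.1 ≠ pS0) {n : ℕ} {x y : FTerm}
    (h : (pS0, [x, y]) ∈ D.inst n) : ∃ t : Trigger, t.rule = ruleEx M ∧
      x = Sum.inr (Sum.inr (t.code, Encodable.encode (Sum.inl 0 : Var))) ∧
      y = t.sub (Sum.inl 1) := by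
  rcases D.mem_inst h with hI' | ⟨k, -, t, hk, hout⟩
  · exact absurd rfl (hI _ hI')
  obtain ⟨⟨P, l⟩, hh, he⟩ := Finset.mem_image.1 hout
  obtain rfl : P = pS0 := congrArg Prod.fst he
  obtain ⟨hrule, rfl⟩ := eq_ruleEx_of_pS0_mem_head (D.valid k t hk).1 hh
  simp only [applyA, vt, List.map, applyT, Prod.mk.injEq, List.cons.injEq, true_and,
    and_true] at he
  refine ⟨t, hrule, ?_, ?_⟩
  · rw [← he.1, Trigger.extSub_of_not_mem (hrule ▸ inl_zero_not_mem_varsF_ruleEx)]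
  · rw [← he.2, Trigger.extSub_of_mem (hrule ▸ inl_one_mem_varsF_ruleEx)]

lemma pS0_functional (hI : ∀ a ∈ I, a.1 ≠ pS0) {n : ℕ} {x y y' : FTerm}
    (h : (pS0, [x, y]) ∈ D.inst n) (h' : (pS0, [x, y']) ∈ D.inst n) : y = y' := by
  obtain ⟨t, hrule, rfl, rfl⟩ := D.exists_ruleEx_of_pS0_mem hI h
  obtain ⟨t', -, hx, rfl⟩ := D.exists_ruleEx_of_pS0_mem hI h'
  obtain ⟨hcode, -⟩ := Prod.ext_iff.1 (Sum.inr_injective (Sum.inr_injective hx))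
  exact (Trigger.rule_eq_and_sub_eq_of_code_eq hcode).2 _ (hrule ▸ inl_one_mem_varsF_ruleEx)

lemma pS0_const_not_mem (hI : ∀ a ∈ I, a.1 ≠ pS0) {n c : ℕ} {y : FTerm} :
    (pS0, [Sum.inl c, y]) ∉ D.inst n := fun h => by
  obtain ⟨t, -, hx, -⟩ := D.exists_ruleEx_of_pS0_mem hI h
  cases hx

end Deriv

section Well

variable {M : TCM} {J : Set Atom} (hJ : ClosedUpToEndo (RM M) J) (hEnd : (pEnd, [wC]) ∈ J)
include hJ hEnd

lemma pS_wC_mem : (pS, [wC, wC]) ∈ J := by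
  obtain ⟨_, -, h⟩ := hJ.exists_endo_applyA_mem (r := ruleSEnd) (σ := fun _ => wC)
    (by simp [RM]) (isHomOn_singleton_iff.2 hEnd) (h := (pS, [vt 0, vt 0]))
    (by simp [ruleSEnd]) (by simp [atomVarsF, varsF, ruleSEnd, vt])
  exact h

lemma pR_pT_wC_mem : (pR 0, [wC, wC]) ∈ J ∧ ∀ j < M.p, (pT j, [wC, wC, wC]) ∈ J := by
  obtain ⟨_, -, hFlood⟩ := hJ.exists_endo_applyA_mem (r := ruleFloodProp) (σ := fun _ => wC)
    (by simp [RM]) (isHomOn_singleton_iff.2 (pS_wC_mem hJ hEnd)) (h := (pFlood, [vt 1]))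
    (by simp [ruleFloodProp]) (by simp [atomVarsF, varsF, ruleFloodProp, vt])
  have hbody : IsHomOn (fun _ => wC) ↑(ruleFloodGen M).1 J := by
    simp only [ruleFloodGen, isHomOn_insert_iff, isHomOn_singleton_iff]
    exact ⟨hFlood, hFlood, hFlood⟩
  refine ⟨?_, fun j hj => ?_⟩
  · obtain ⟨_, -, h⟩ := hJ.exists_endo_applyA_mem (by simp [RM]) hbody
      (h := (pR 0, [vt 0, vt 1])) (by simp [ruleFloodGen]; exact Or.inr ⟨0, M.p_pos, rfl⟩)
      (by simp [atomVarsF, varsF, ruleFloodGen, vt, Finset.subset_iff])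
    exact h
  · obtain ⟨_, -, h⟩ := hJ.exists_endo_applyA_mem (by simp [RM]) hbody
      (h := (pT j, [vt 0, vt 1, vt 2])) (by simp [ruleFloodGen]; exact ⟨j, hj, by simp⟩)
      (by simp [atomVarsF, varsF, ruleFloodGen, vt, Finset.subset_iff])
    exact h

end Well

/-! ### Chains -/

structure IsS0Chain (M : TCM) (J : Set Atom) (n : ℕ) (φ : ℕ → FTerm) : Prop where
  base : φ 0 = wC
  pS0_mem : ∀ i < n, (pS0, [φ (i + 1), φ i]) ∈ J
  pS_mem : ∀ i < n, (pS, [φ (i + 1), φ i]) ∈ J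
  pR_top : (pR 0, [φ n, φ n]) ∈ J
  pT_top : ∀ j < M.p, (pT j, [φ n, φ n, φ n]) ∈ J

namespace IsS0Chain

variable {M : TCM} {J : Set Atom} {n : ℕ} {φ : ℕ → FTerm}

lemma comp (hC : IsS0Chain M J n φ) {H : Subst} (hH : IsHomOn H J J) :
    IsS0Chain M J n (applyT H ∘ φ) where
  base := by simp only [Function.comp_apply, hC.base]; rfl
  pS0_mem i hi := hH _ (hC.pS0_mem i hi)
  pS_mem i hi := hH _ (hC.pS_mem i hi)
  pR_top := hH _ hC.pR_top
  pT_top j hj := hH _ (hC.pT_top j hj)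

/-- Positions are counted down from `c ≤ n` with truncated subtraction: below `φ 0 = w` the
chain continues along the loop `S(w, w)`. -/
lemma pS_mem_sub (hC : IsS0Chain M J n φ) (hw : (pS, [wC, wC]) ∈ J) {c : ℕ} (hc : c ≤ n)
    (j : ℕ) : (pS, [φ (c - j), φ (c - (j + 1))]) ∈ J := by
  rcases hcj : c - j with _ | u
  · rw [show c - (j + 1) = 0 by omega, hC.base]
    exact hw
  · rw [show c - (j + 1) = u by omega]
    exact hC.pS_mem u (by omega)

lemma update_succ (hC : IsS0Chain M J n φ) {x : FTerm} (hS0 : (pS0, [x, φ n]) ∈ J)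
    (hS : (pS, [x, φ n]) ∈ J) (hR : (pR 0, [x, x]) ∈ J) (hT : ∀ j < M.p, (pT j, [x, x, x]) ∈ J) :
    IsS0Chain M J (n + 1) (Function.update φ (n + 1) x) := by
  have hlow : ∀ i ≤ n, Function.update φ (n + 1) x i = φ i := fun i hi =>
    Function.update_of_ne (by omega) _ _
  have hlink : ∀ P, (∀ i < n, (P, [φ (i + 1), φ i]) ∈ J) → (P, [x, φ n]) ∈ J → ∀ i < n + 1,
      (P, [Function.update φ (n + 1) x (i + 1), Function.update φ (n + 1) x i]) ∈ J := by
    intro P hP hPx i hi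
    rw [hlow i (by omega)]
    rcases (by omega : i = n ∨ i < n) with rfl | hi
    · rwa [Function.update_self]
    · rw [hlow (i + 1) hi]
      exact hP i hi
  refine ⟨by rw [hlow 0 (Nat.zero_le n), hC.base], hlink _ hC.pS0_mem hS0,
    hlink _ hC.pS_mem hS, ?_, ?_⟩
  · rwa [Function.update_self]
  · simpa only [Function.update_self] using hT

lemma injOn (hC : IsS0Chain M J n φ)
    (hfun : ∀ x y y', (pS0, [x, y]) ∈ J → (pS0, [x, y']) ∈ J → y = y')
    (hw : ∀ y, (pS0, [wC, y]) ∉ J) : Set.InjOn φ (Set.Iic n) := by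
  intro i hi j hj hij
  induction i generalizing j with
  | zero =>
    rcases j with _ | j
    · rfl
    · exact absurd (hC.base ▸ hij ▸ hC.pS0_mem j hj) (hw _)
  | succ i ih =>
    rcases j with _ | j
    · exact absurd (hC.base ▸ hij.symm ▸ hC.pS0_mem i hi) (hw _)
    · have := hfun _ _ _ (hC.pS0_mem i hi) (hij ▸ hC.pS0_mem j hj)
      rw [ih (Nat.le_of_succ_le hi) (Nat.le_of_succ_le hj) this]

end IsS0Chain

lemma infinite_adom_of_chains {M : TCM} {J : Set Atom} (hchain : ∀ n, ∃ φ, IsS0Chain M J n φ)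
    (hfun : ∀ x y y', (pS0, [x, y]) ∈ J → (pS0, [x, y']) ∈ J → y = y')
    (hw : ∀ y, (pS0, [wC, y]) ∉ J) : (adom J).Infinite := by
  intro hfin
  set n := hfin.toFinset.card + 1
  obtain ⟨φ, hC⟩ := hchain n
  have hsub : (Finset.range n).image φ ⊆ hfin.toFinset := by
    intro x hx
    obtain ⟨i, hi, rfl⟩ := Finset.mem_image.1 hx
    exact hfin.mem_toFinset.2 ⟨_, hC.pS0_mem i (Finset.mem_range.1 hi), by simp⟩
  have hinj : Set.InjOn φ ↑(Finset.range n) :=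
    (hC.injOn hfun hw).mono fun i hi => (Finset.mem_range.1 hi).le
  have := Finset.card_le_card hsub
  rw [Finset.card_image_of_injOn hinj, Finset.card_range] at this
  omega

/-! ### Running the machine inside a closed instance -/

section Simulation

variable {M : TCM} {J : Set Atom} {n : ℕ} {φ : ℕ → FTerm}
  (hJ : ClosedUpToEndo (RM M) J) (hw : (pS, [wC, wC]) ∈ J)
include hJ hw

lemma exists_endo_pG_two (hC : IsS0Chain M J n φ) :
    ∃ H, IsHomOn H J J ∧ (pG, [applyT H (φ n), applyT H (φ (n - 2))]) ∈ J := by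
  let σ := Subst.ofFun fun k => if k = 0 then φ n else if k = 1 then φ (n - 2) else φ (n - 1)
  have hbody : IsHomOn σ ↑ruleGInit.1 J := by
    refine isHomOn_spath (fun j => φ (n - j)) rfl rfl (fun j hj hj2 => ?_)
      fun j _ => hC.pS_mem_sub hw le_rfl j
    obtain rfl : j = 1 := by omega
    rfl
  exact hJ.exists_endo_applyA_mem (by simp [RM]) hbody (h := (pG, [vt 0, vt 1]))
    (by simp [ruleGInit]) (by simp [atomVarsF, vt, Finset.subset_iff, mem_varsF_spath_left,
      mem_varsF_spath_right, ruleGInit])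

lemma exists_endo_pR_succ (hC : IsS0Chain M J n φ) {l : ℕ}
    (hR : (pR (l % M.p), [φ n, φ (n - l)]) ∈ J) : ∃ H, IsHomOn H J J ∧
      (pR ((l + 1) % M.p), [applyT H (φ n), applyT H (φ (n - (l + 1)))]) ∈ J := by
  let σ := Subst.ofFun fun k => if k = 0 then φ n else if k = 1 then φ (n - l)
    else φ (n - (l + 1))
  have hbody : IsHomOn σ ↑(ruleR M (l % M.p)).1 J := by
    simp only [ruleR, isHomOn_insert_iff, isHomOn_singleton_iff]
    exact ⟨hR, hC.pS_mem_sub hw le_rfl l⟩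
  obtain ⟨H, hH, h⟩ := hJ.exists_endo_applyA_mem
    (mem_RM_of_lt_p (Nat.mod_lt l M.p_pos) (by simp)) hbody
    (h := (pR ((l % M.p + 1) % M.p), [vt 0, vt 2])) (by simp [ruleR])
    (by simp [atomVarsF, varsF, ruleR, vt, Finset.subset_iff])
  rw [Nat.mod_add_mod] at h
  exact ⟨H, hH, h⟩

lemma exists_endo_pR (hC : IsS0Chain M J n φ) (l : ℕ) :
    ∃ H, IsHomOn H J J ∧ (pR (l % M.p), [applyT H (φ n), applyT H (φ (n - l))]) ∈ J := by
  induction l with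
  | zero => exact ⟨Sum.inr, isHomOn_inr_iff.2 le_rfl, by simpa [applyT_inr] using hC.pR_top⟩
  | succ l ih =>
    obtain ⟨H, hH, hR⟩ := ih
    obtain ⟨H', hH', hR'⟩ := exists_endo_pR_succ hJ hw (hC.comp hH) hR
    exact ⟨H'.comp H, hH'.comp hH, by simpa only [applyT_comp, Function.comp_apply] using hR'⟩

lemma exists_endo_pT_succ (hC : IsS0Chain M J n φ) {i a b : ℕ} (hi : i < M.p) (ha : a ≤ n)
    (hb : b ≤ n) (hT : (pT i, [φ n, φ a, φ b]) ∈ J) : ∃ H, IsHomOn H J J ∧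
      (pT i, [applyT H (φ n), applyT H (φ (a - M.ri i)), applyT H (φ (b - M.qi i))]) ∈ J := by
  obtain ⟨hq, hr, -⟩ := M.qi_pos_ri_pos_coprime i
  set r := M.ri i
  set q := M.qi i
  -- the two paths of `ruleT` have inner variables `10 + j` and `11 + r + j`
  let σ := Subst.ofFun fun k =>
    if k = 0 then φ n else if k = 1 then φ a else if k = 2 then φ b
    else if k = 3 then φ (a - r) else if k = 4 then φ (b - q)
    else if k ≤ 10 + r then φ (a - (k - 10)) else φ (b - (k - (11 + r)))
  have hbody : IsHomOn σ ↑(ruleT M i).1 J := by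
    simp only [ruleT, isHomOn_union_iff, isHomOn_singleton_iff]
    refine ⟨⟨hT, isHomOn_spath (fun j => φ (a - j)) rfl rfl (fun j h0 hj => ?_)
      fun j _ => hC.pS_mem_sub hw ha j⟩, isHomOn_spath (fun j => φ (b - j)) rfl rfl
      (fun j h0 hj => ?_) fun j _ => hC.pS_mem_sub hw hb j⟩
    all_goals
      simp only [σ, Subst.ofFun, Sum.elim_inl]
      split_ifs <;> first | omega | (congr 2; omega)
  refine hJ.exists_endo_applyA_mem (mem_RM_of_lt_p hi (by simp)) hbody
    (h := (pT i, [vt 0, vt 3, vt 4])) (by simp [ruleT]) fun v hv => ?_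
  simp only [mem_atomVarsF, vt, List.mem_cons, Sum.inr.injEq, List.not_mem_nil, or_false] at hv
  rcases hv with rfl | rfl | rfl
  · exact mem_varsF.2 ⟨(pT i, [vt 0, vt 1, vt 2]), by simp [ruleT], by simp [vt]⟩
  · exact varsF_mono (Finset.subset_union_right.trans Finset.subset_union_left)
      (mem_varsF_spath_right hr)
  · exact varsF_mono Finset.subset_union_right (mem_varsF_spath_right hq)

lemma exists_endo_pT (hC : IsS0Chain M J n φ) {i : ℕ} (hi : i < M.p) (s : ℕ) :
    ∃ H, IsHomOn H J J ∧ (pT i, [applyT H (φ n), applyT H (φ (n - s * M.ri i)),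
      applyT H (φ (n - s * M.qi i))]) ∈ J := by
  induction s with
  | zero => exact ⟨Sum.inr, isHomOn_inr_iff.2 le_rfl, by simpa [applyT_inr] using hC.pT_top i hi⟩
  | succ s ih =>
    obtain ⟨H, hH, hT⟩ := ih
    obtain ⟨H', hH', hT'⟩ := exists_endo_pT_succ hJ hw (hC.comp hH) hi (Nat.sub_le _ _)
      (Nat.sub_le _ _) hT
    refine ⟨H'.comp H, hH'.comp hH, ?_⟩
    simpa only [applyT_comp, Function.comp_apply, Nat.sub_sub, Nat.succ_mul] using hT'

lemma exists_endo_pG_g (hC : IsS0Chain M J n φ) {v : ℕ} (hG : (pG, [φ n, φ (n - v)]) ∈ J)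
    (hdvd : M.ri (v % M.p) ∣ v) : ∃ H, IsHomOn H J J ∧
      (pG, [applyT H (φ n), applyT H (φ (n - v / M.ri (v % M.p) * M.qi (v % M.p)))]) ∈ J := by
  set i := v % M.p
  have hi : i < M.p := Nat.mod_lt v M.p_pos
  obtain ⟨H₁, hH₁, hR⟩ := exists_endo_pR hJ hw hC v
  obtain ⟨H₂, hH₂, hT⟩ := exists_endo_pT hJ hw (hC.comp hH₁) hi (v / M.ri i)
  rw [Nat.div_mul_cancel hdvd] at hT
  let σ := Subst.ofFun fun k => applyT H₂ (applyT H₁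
    (φ (if k = 0 then n else if k = 1 then n - v else n - v / M.ri i * M.qi i)))
  have hbody : IsHomOn σ ↑(ruleGStep i).1 J := by
    simp only [ruleGStep, isHomOn_insert_iff, isHomOn_singleton_iff]
    exact ⟨hH₂ _ (hH₁ _ hG), hH₂ _ hR, hT⟩
  obtain ⟨H₃, hH₃, hG'⟩ := hJ.exists_endo_applyA_mem (mem_RM_of_lt_p hi (by simp)) hbody
    (h := (pG, [vt 0, vt 2])) (by simp [ruleGStep])
    (by simp [atomVarsF, varsF, ruleGStep, vt, Finset.subset_iff])
  refine ⟨H₃.comp (H₂.comp H₁), hH₃.comp (hH₂.comp hH₁), ?_⟩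
  simp only [applyT_comp]
  exact hG'

lemma exists_endo_pG_gIter (hM : ¬ M.Halts) (hC : IsS0Chain M J n φ) (k : ℕ) :
    ∃ H, IsHomOn H J J ∧ (pG, [applyT H (φ n), applyT H (φ (n - M.gIter k))]) ∈ J := by
  induction k with
  | zero => exact exists_endo_pG_two hJ hw hC
  | succ k ih =>
    obtain ⟨H, hH, hG⟩ := ih
    obtain ⟨H', hH', hG'⟩ := exists_endo_pG_g hJ hw (hC.comp hH) hG (TCM.ri_dvd_gIter hM k)
    refine ⟨H'.comp H, hH'.comp hH, ?_⟩
    rw [TCM.gIter_succ_of_not_halts hM]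
    simpa only [applyT_comp, Function.comp_apply] using hG'

lemma exists_endo_pG_wC (hM : ¬ M.Halts) (hC : IsS0Chain M J n φ) :
    ∃ H, IsHomOn H J J ∧ (pG, [applyT H (φ n), wC]) ∈ J := by
  obtain ⟨H, hH, hG⟩ := exists_endo_pG_gIter hJ hw hM hC n
  rw [Nat.sub_eq_zero_of_le (TCM.lt_gIter_of_not_halts hM n).le, hC.base] at hG
  exact ⟨H, hH, hG⟩

end Simulation

section Extension

variable {M : TCM} {J : Set Atom} (hJ : ClosedUpToEndo (RM M) J) (hEnd : (pEnd, [wC]) ∈ J)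
include hJ hEnd

lemma exists_chain_succ {n : ℕ} {φ : ℕ → FTerm} (hC : IsS0Chain M J n φ)
    (hG : (pG, [φ n, wC]) ∈ J) : ∃ φ', IsS0Chain M J (n + 1) φ' := by
  let t : Trigger := ⟨ruleEx M, Subst.ofFun fun k => if k = 1 then φ n else wC⟩
  have hon : t.isOn J := by
    simp only [Trigger.isOn, t, ruleEx, isHomOn_insert_iff, isHomOn_singleton_iff]
    exact ⟨hG, hEnd⟩
  obtain ⟨H, hH, hout⟩ := hJ t (by simp [RM, t]) hon
  have hmem : ∀ h ∈ (ruleEx M).2, applyA H (applyA t.extSub h) ∈ J := fun h hh =>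
    hout _ (Trigger.applyA_extSub_mem_out hh)
  set x := applyT H (t.extSub (Sum.inl 0))
  have hS0 : (pS0, [x, applyT H (φ n)]) ∈ J := by
    have h := hmem (pS0, [vt 0, vt 1]) (by simp [ruleEx])
    change (pS0, [x, applyT H (t.extSub (Sum.inl 1))]) ∈ J at h
    rwa [Trigger.extSub_of_mem inl_one_mem_varsF_ruleEx] at h
  have hR : (pR 0, [x, x]) ∈ J := hmem (pR 0, [vt 0, vt 0]) (by simp [ruleEx])
  have hT : ∀ j < M.p, (pT j, [x, x, x]) ∈ J := fun j hj =>
    hmem (pT j, [vt 0, vt 0, vt 0]) (by simp [ruleEx]; exact ⟨j, hj, rfl⟩)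
  obtain ⟨H₂, hH₂, hS⟩ := hJ.exists_endo_applyA_mem (r := ruleS)
    (σ := Subst.ofFun fun k => if k = 0 then x else applyT H (φ n)) (by simp [RM])
    (isHomOn_singleton_iff.2 hS0) (h := (pS, [vt 0, vt 1])) (by simp [ruleS])
    (by simp [atomVarsF, varsF, ruleS, vt])
  exact ⟨_, ((hC.comp hH).comp hH₂).update_succ (hH₂ _ hS0) hS (hH₂ _ hR)
    fun j hj => hH₂ _ (hT j hj)⟩

lemma exists_chain (hM : ¬ M.Halts) (n : ℕ) : ∃ φ, IsS0Chain M J n φ := by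
  induction n with
  | zero =>
    obtain ⟨hR, hT⟩ := pR_pT_wC_mem hJ hEnd
    exact ⟨fun _ => wC, rfl, fun _ h => absurd h (Nat.not_lt_zero _),
      fun _ h => absurd h (Nat.not_lt_zero _), hR, hT⟩
  | succ n ih =>
    obtain ⟨φ, hC⟩ := ih
    obtain ⟨H, hH, hG⟩ := exists_endo_pG_wC hJ (pS_wC_mem hJ hEnd) hM hC
    exact exists_chain_succ hJ hEnd (hC.comp hH) hG

end Extension

/-- if `M` does not halt, there is no terminating (fair and finite)
`X`-derivation from `⟨R_M, {End(w)}⟩`. -/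
theorem stmt_4 (M : TCM) (hM : ¬ M.Halts) (X : ChaseVariant) :
    ¬ ∃ D : Deriv (RM M) IE, D.IsX X ∧ D.Fair X ∧ D.Finite := by
  rintro ⟨D, -, hFair, N, hN⟩
  have hfresh : ∀ c k, Sum.inr (c, k) ∉ setVars IE := by simp [setVars, IE, wC, ct]
  have hS0 : ∀ a ∈ IE, a.1 ≠ pS0 := by simp [IE, pEnd, pS0]
  have hJ := D.closedUpToEndo_inst hfresh hFair hN
  have hEnd : (pEnd, [wC]) ∈ D.inst N := instSeq_mono IE D.steps (Nat.zero_le N) rfl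
  exact infinite_adom_of_chains (exists_chain hJ hEnd hM) (fun _ _ _ => D.pS0_functional hS0)
    (fun _ => D.pS0_const_not_mem hS0) (D.finite_adom_inst (Set.finite_singleton _) N)

end
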